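/- Let G be a group, N a normal subgroup, π : G → G/N the quotient map, γ ∈ G, Q_γ(v) = [v,γ], B_γ(v₁,v₂) = [v₁,Q_γ(v₂)], and let V be a subgroup of G. Write Q̄ = π ∘ Q_γ and B̄ = π ∘ B_γ. Assume: (i) the values of Q̄ on V and of B̄ on V × V lie in an abelian subgroup of G/N that is central in π(⟨V,γ⟩); (ii) B̄ is bi-multiplicative on V × V, i.e. B̄(v₁v₁′, v₂) = B̄(v₁,v₂)B̄(v₁′,v₂) and B̄(v₁, v₂v₂′) = B̄(v₁,v₂)B̄(v₁,v₂′); (iii) B̄ is symmetric on V × V. Then: (a) Q̄(v) · Q̄(v⁻¹) = B̄(v,v) for every v ∈ V; and (b) the set I = { v ∈ V : Q̄(v) = Q̄(v⁻¹) } is a subgroup of V, and for v ∈ I one has Q̄(v)² = B̄(v,v). -/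
import Mathlib


/-- Values and symmetry of the multiplicative analogues `Q̄_γ`, `B̄_γ` on a
subgroup `V`, modulo a normal subgroup `N`:  (a) `Q̄(v)·Q̄(v⁻¹) = B̄(v,v)`;
(b) `I = {v ∈ V : Q̄(v) = Q̄(v⁻¹)}` is a subgroup, on which `Q̄(v)² = B̄(v,v)`. -/
theorem stmt5 {G : Type*} [Group G] (N : Subgroup G) [N.Normal] (γ : G)
    (V : Subgroup G)
    (Qbar : G → G ⧸ N) (Bbar : G → G → G ⧸ N)
    (hQ : ∀ v, Qbar v = QuotientGroup.mk (v * γ * v⁻¹ * γ⁻¹))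
    (hB : ∀ v₁ v₂, Bbar v₁ v₂ =
      QuotientGroup.mk (v₁ * (v₂ * γ * v₂⁻¹ * γ⁻¹) * v₁⁻¹ * (v₂ * γ * v₂⁻¹ * γ⁻¹)⁻¹))
    (A : Subgroup (G ⧸ N))
    (hab : ∀ a ∈ A, ∀ b ∈ A, a * b = b * a)
    (hcentral : ∀ a ∈ A,
      ∀ x ∈ (Subgroup.closure ((V : Set G) ∪ {γ})).map (QuotientGroup.mk' N),
        a * x = x * a)
    (hQA : ∀ v ∈ V, Qbar v ∈ A)
    (hBA : ∀ v₁ ∈ V, ∀ v₂ ∈ V, Bbar v₁ v₂ ∈ A)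
    (hBmul₁ : ∀ v₁ ∈ V, ∀ v₁' ∈ V, ∀ v₂ ∈ V,
      Bbar (v₁ * v₁') v₂ = Bbar v₁ v₂ * Bbar v₁' v₂)
    (hBmul₂ : ∀ v₁ ∈ V, ∀ v₂ ∈ V, ∀ v₂' ∈ V,
      Bbar v₁ (v₂ * v₂') = Bbar v₁ v₂ * Bbar v₁ v₂')
    (hBsymm : ∀ v₁ ∈ V, ∀ v₂ ∈ V, Bbar v₁ v₂ = Bbar v₂ v₁) :
    (∀ v ∈ V, Qbar v * Qbar v⁻¹ = Bbar v v) ∧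
    (∃ I : Subgroup G, (I : Set G) = {v | v ∈ V ∧ Qbar v = Qbar v⁻¹} ∧
      ∀ v ∈ I, (Qbar v) ^ 2 = Bbar v v) := by
  -- key group identity: Q(v₁v₂) = B(v₁,v₂) Q(v₂) Q(v₁)
  have hmk : ∀ v₁ v₂ : G, Qbar (v₁ * v₂) = Bbar v₁ v₂ * Qbar v₂ * Qbar v₁ := by
    intro v₁ v₂
    rw [hQ, hQ, hQ, hB, ← QuotientGroup.mk_mul, ← QuotientGroup.mk_mul]
    congr 1
    group
  have hQ1 : Qbar 1 = 1 := by
    rw [hQ]; simp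
  have hB1 : ∀ v : G, Bbar v 1 = 1 := by
    intro v; rw [hB]; simp
  have hBinv₁ : ∀ v₁ ∈ V, ∀ v₂ ∈ V, Bbar v₁⁻¹ v₂ = (Bbar v₁ v₂)⁻¹ := by
    intro v₁ h₁ v₂ h₂
    have := hBmul₁ v₁ h₁ v₁⁻¹ (V.inv_mem h₁) v₂ h₂
    rw [mul_inv_cancel] at this
    have h1 : Bbar 1 v₂ = 1 := by
      rw [hBsymm 1 V.one_mem v₂ h₂, hB1]
    rw [h1] at this
    exact eq_inv_of_mul_eq_one_right this.symm
  have hBinv₂ : ∀ v₁ ∈ V, ∀ v₂ ∈ V, Bbar v₁ v₂⁻¹ = (Bbar v₁ v₂)⁻¹ := by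
    intro v₁ h₁ v₂ h₂
    rw [hBsymm v₁ h₁ v₂⁻¹ (V.inv_mem h₂), hBinv₁ v₂ h₂ v₁ h₁, hBsymm v₂ h₂ v₁ h₁]
  -- part (a)
  have parta : ∀ v ∈ V, Qbar v * Qbar v⁻¹ = Bbar v v := by
    intro v hv
    have h := hmk v v⁻¹
    rw [mul_inv_cancel, hQ1, hBinv₂ v hv v hv] at h
    have h' : Bbar v v = Qbar v⁻¹ * Qbar v := by
      rw [mul_assoc, eq_comm, inv_mul_eq_one] at h
      exact h
    rw [h', hab (Qbar v) (hQA v hv) (Qbar v⁻¹) (hQA v⁻¹ (V.inv_mem hv))]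
  refine ⟨parta, ?_⟩
  refine ⟨{ carrier := {v | v ∈ V ∧ Qbar v = Qbar v⁻¹}
            one_mem' := ⟨V.one_mem, by rw [inv_one]⟩
            inv_mem' := by
              rintro a ⟨ha, he⟩
              exact ⟨V.inv_mem ha, by rw [inv_inv, he]⟩
            mul_mem' := by
              rintro a b ⟨ha, ea⟩ ⟨hb, eb⟩
              refine ⟨V.mul_mem ha hb, ?_⟩
              rw [mul_inv_rev, hmk a b, hmk b⁻¹ a⁻¹,
                hBinv₁ b hb a⁻¹ (V.inv_mem ha), hBinv₂ b hb a ha, inv_inv,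
                hBsymm b hb a ha, ← ea, ← eb, mul_assoc, mul_assoc,
                hab (Qbar b) (hQA b hb) (Qbar a) (hQA a ha)] },
          rfl, ?_⟩
  rintro v ⟨hv, he⟩
  rw [pow_two]
  nth_rewrite 2 [he]
  exact parta v hv
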